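/- arXiv:2205.14423 — 9 statements merged into one kernel-verified Lean document; each statement's English description precedes it below -/
import Mathlib

section
/- Let A ∈ ℂ^{n×n} with ρ(ĀA) < 1, where Ā is the entrywise complex conjugate and ρ the spectral radius. Then for every Hermitian W ∈ ℂ^{n×n} there exists a unique Hermitian X with X − A^H X̄ A = W, it is given by the convergent series X = Σ_{k=0}^∞ ((ĀA)^k)^H (W + A^H W̄ A) (ĀA)^k, and the solution map is order preserving: if W ≥ W' (Loewner order) and X, X' are the corresponding solutions, then X ≥ X'. -/
open Matrix Filter Topology
open scoped ComplexOrder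

noncomputable section

namespace CDARE

/-- Entrywise complex conjugate of a matrix. -/
def mconj {p q : ℕ} (M : Matrix (Fin p) (Fin q) ℂ) : Matrix (Fin p) (Fin q) ℂ :=
  M.map (starRingEnd ℂ)

end CDARE

/-! With `φ X = Aᴴ X̄ A` and `B = ĀA` one has `φ (φ X) = Bᴴ X B`. Hence `X - φ X = W` implies
the ordinary Stein equation `X - Bᴴ X B = W + φ W`, and conversely, because `1 - φ` commutes with
the Stein operator `1 - φ²`, which is injective. By Gelfand's formula `ρ(B) < 1` makes
`‖(Bᵏ)ᴴ C Bᵏ‖` decay geometrically, and `X - Bᴴ X B = C` holds exactly when `X` is the sum of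
`Σ (Bᵏ)ᴴ C Bᵏ`. Uniqueness of sums then gives uniqueness of the solution, applying it to `Xᴴ`
gives hermiticity, and for `W ≥ 0` every term of the series is positive semidefinite, a closed
condition. -/

section Stein

open scoped NNReal ENNReal

variable {R : Type*} [NormedRing R] [NormedAlgebra ℂ R] [CompleteSpace R] {b : R}

lemma eventually_nnnorm_pow_le_of_spectralRadius_lt {r : ℝ≥0} (h : spectralRadius ℂ b < r) :
    ∀ᶠ k in atTop, ‖b ^ k‖₊ ≤ r ^ k := by
  have hroot : ∀ᶠ k : ℕ in atTop, (‖b ^ k‖₊ : ℝ≥0∞) ^ (1 / (k : ℝ)) < r :=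
    (spectrum.pow_nnnorm_pow_one_div_tendsto_nhds_spectralRadius b).eventually_lt_const h
  filter_upwards [hroot, eventually_ge_atTop 1] with k hk hk1
  have hk0 : (k : ℝ) ≠ 0 := by positivity
  have := ENNReal.rpow_le_rpow hk.le (by positivity : (0 : ℝ) ≤ k)
  rw [← ENNReal.rpow_mul, one_div, inv_mul_cancel₀ hk0, ENNReal.rpow_one,
    ENNReal.rpow_natCast] at this
  exact_mod_cast this

variable [StarRing R] [NormedStarGroup R]

lemma summable_star_pow_mul_mul_pow (hb : spectralRadius ℂ b < 1) (c : R) :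
    Summable fun k => star (b ^ k) * c * b ^ k := by
  obtain ⟨r, hρr, hr1⟩ := ENNReal.lt_iff_exists_nnreal_btwn.mp hb
  have hr1 : (r : ℝ) < 1 := by exact_mod_cast hr1
  refine Summable.of_norm_bounded_eventually_nat
    ((summable_geometric_of_lt_one (r := (r : ℝ) ^ 2) (by positivity)
      (by nlinarith [r.coe_nonneg])).mul_left ‖c‖) ?_
  filter_upwards [eventually_nnnorm_pow_le_of_spectralRadius_lt hρr] with k hk
  have hk : ‖b ^ k‖ ≤ (r : ℝ) ^ k := by exact_mod_cast hk
  calc ‖star (b ^ k) * c * b ^ k‖ ≤ ‖b ^ k‖ * ‖c‖ * ‖b ^ k‖ := by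
        simpa only [norm_star] using norm_mul₃_le (a := star (b ^ k))
    _ ≤ (r : ℝ) ^ k * ‖c‖ * (r : ℝ) ^ k := by gcongr
    _ = ‖c‖ * ((r : ℝ) ^ 2) ^ k := by ring

lemma sub_star_mul_mul_eq_iff_hasSum (hb : spectralRadius ℂ b < 1) {x c : R} :
    x - star b * x * b = c ↔ HasSum (fun k => star (b ^ k) * c * b ^ k) x := by
  have hshift : ∀ y : R, ∀ k : ℕ, star (b ^ (k + 1)) * y * b ^ (k + 1) =
      star (b ^ k) * (star b * y * b) * b ^ k := by
    intro y k
    simp only [pow_succ', star_mul, mul_assoc]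
  constructor
  · rintro rfl
    have hpartial : ∀ N, ∑ k ∈ Finset.range N, star (b ^ k) * (x - star b * x * b) * b ^ k =
        x - star (b ^ N) * x * b ^ N := by
      intro N
      induction N with
      | zero => simp
      | succ N ih => rw [Finset.sum_range_succ, ih, hshift]; noncomm_ring
    refine (summable_star_pow_mul_mul_pow hb _).hasSum_iff_tendsto_nat.mpr ?_
    simp only [hpartial]
    simpa using tendsto_const_nhds.sub (summable_star_pow_mul_mul_pow hb x).tendsto_atTop_zero
  · intro hx
    have htail := (hasSum_nat_add_iff' 1).mpr hx
    have hmul : HasSum (fun k => star (b ^ (k + 1)) * c * b ^ (k + 1)) (star b * x * b) := by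
      simpa only [pow_succ, star_mul, mul_assoc] using (hx.mul_left (star b)).mul_right b
    rw [← htail.unique hmul, Finset.sum_range_one, pow_zero, star_one, one_mul, mul_one]
    abel

end Stein

open scoped Matrix.Norms.L2Operator in
lemma Matrix.summable_conjTranspose_pow_mul_mul_pow {ι : Type*} [Fintype ι] [DecidableEq ι]
    {B : Matrix ι ι ℂ} (hB : spectralRadius ℂ B < 1) (C : Matrix ι ι ℂ) :
    Summable fun k => (B ^ k)ᴴ * C * B ^ k :=
  summable_star_pow_mul_mul_pow hB C

lemma AddMonoidHom.sub_apply_eq_iff_of_injective_sub_apply_apply {G : Type*} [AddCommGroup G]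
    (φ : G →+ G) (hinj : Function.Injective fun x => x - φ (φ x)) {x w : G} :
    x - φ x = w ↔ x - φ (φ x) = w + φ w := by
  constructor
  · rintro rfl
    simp only [map_sub]
    abel
  · intro h
    apply hinj
    -- `1 - φ` commutes with `1 - φ²`
    calc x - φ x - φ (φ (x - φ x)) = x - φ (φ x) - φ (x - φ (φ x)) := by
          simp only [map_sub]; abel
      _ = w - φ (φ w) := by rw [h, map_add]; abel

lemma Matrix.isClosed_setOf_posSemidef {ι 𝕜 : Type*} [Fintype ι] [CommRing 𝕜]
    [PartialOrder 𝕜] [StarRing 𝕜] [TopologicalSpace 𝕜] [IsTopologicalRing 𝕜] [ContinuousStar 𝕜]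
    [OrderClosedTopology 𝕜] : IsClosed {M : Matrix ι ι 𝕜 | M.PosSemidef} := by
  simp only [posSemidef_iff_dotProduct_mulVec, Set.ofPred_and, Set.ofPred_forall]
  refine (isClosed_eq continuous_id.matrix_conjTranspose continuous_id).inter
    (isClosed_iInter fun x => isClosed_le continuous_const ?_)
  fun_prop

lemma Matrix.PosSemidef.of_hasSum {ι β 𝕜 : Type*} [Fintype ι] [CommRing 𝕜]
    [PartialOrder 𝕜] [StarRing 𝕜] [TopologicalSpace 𝕜] [IsTopologicalRing 𝕜] [ContinuousStar 𝕜]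
    [OrderClosedTopology 𝕜] [AddLeftMono 𝕜] {f : β → Matrix ι ι 𝕜} {M : Matrix ι ι 𝕜}
    (hf : HasSum f M) (h : ∀ k, (f k).PosSemidef) : M.PosSemidef :=
  isClosed_setOf_posSemidef.mem_of_tendsto hf
    (Eventually.of_forall fun s => posSemidef_sum s fun k _ => h k)

namespace CDARE

section Conjugate

variable {n : ℕ}

lemma mconj_mul {p q r : ℕ} (M : Matrix (Fin p) (Fin q) ℂ) (N : Matrix (Fin q) (Fin r) ℂ) :
    mconj (M * N) = mconj M * mconj N :=
  Matrix.map_mul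

lemma mconj_mconj {p q : ℕ} (M : Matrix (Fin p) (Fin q) ℂ) : mconj (mconj M) = M := by
  ext; simp [mconj]

lemma conjTranspose_mconj {p q : ℕ} (M : Matrix (Fin p) (Fin q) ℂ) :
    (mconj M)ᴴ = mconj Mᴴ := by
  ext; simp [mconj]

lemma posSemidef_mconj {M : Matrix (Fin n) (Fin n) ℂ} (hM : M.PosSemidef) :
    (mconj M).PosSemidef := by
  have : mconj M = Mᴴᵀ := by ext; simp [mconj]
  exact this ▸ hM.conjTranspose.transpose

/-- The conjugate Stein operator `C_A` is `1 - conjSandwich A`. -/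
def conjSandwich (A : Matrix (Fin n) (Fin n) ℂ) :
    Matrix (Fin n) (Fin n) ℂ →+ Matrix (Fin n) (Fin n) ℂ :=
  AddMonoidHom.mk' (fun X => Aᴴ * mconj X * A) fun X Y => by
    simp [mconj, Matrix.map_add, mul_add, add_mul]

lemma conjSandwich_apply (A X : Matrix (Fin n) (Fin n) ℂ) :
    conjSandwich A X = Aᴴ * mconj X * A := rfl

lemma conjSandwich_conjSandwich (A X : Matrix (Fin n) (Fin n) ℂ) :
    conjSandwich A (conjSandwich A X) = (mconj A * A)ᴴ * X * (mconj A * A) := by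
  simp only [conjSandwich_apply, mconj_mul, mconj_mconj, conjTranspose_mul, conjTranspose_mconj,
    mul_assoc]

lemma conjTranspose_conjSandwich (A X : Matrix (Fin n) (Fin n) ℂ) :
    (conjSandwich A X)ᴴ = conjSandwich A Xᴴ := by
  simp only [conjSandwich_apply, conjTranspose_mul, conjTranspose_conjTranspose,
    conjTranspose_mconj, mul_assoc]

open scoped Matrix.Norms.L2Operator in
lemma conjStein_iff_hasSum {A X W : Matrix (Fin n) (Fin n) ℂ}
    (hρ : spectralRadius ℂ (mconj A * A) < 1) :
    X - conjSandwich A X = W ↔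
      HasSum (fun k => ((mconj A * A) ^ k)ᴴ * (W + conjSandwich A W) * (mconj A * A) ^ k) X := by
  have hstein : ∀ {Y C}, Y - conjSandwich A (conjSandwich A Y) = C ↔
      HasSum (fun k => ((mconj A * A) ^ k)ᴴ * C * (mconj A * A) ^ k) Y := by
    intro Y C
    rw [conjSandwich_conjSandwich]
    exact sub_star_mul_mul_eq_iff_hasSum hρ
  have hinj : Function.Injective fun Y => Y - conjSandwich A (conjSandwich A Y) :=
    fun Y Y' h => (hstein.mp h).unique (hstein.mp rfl)
  exact ((conjSandwich A).sub_apply_eq_iff_of_injective_sub_apply_apply hinj).trans hstein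

end Conjugate

/-- For `A` with `ρ(ĀA) < 1`, the conjugate Stein equation `X - Aᴴ X̄ A = W` has, for every
Hermitian `W`, a unique Hermitian solution given by the convergent series
`X = Σₖ ((ĀA)^k)ᴴ (W + Aᴴ W̄ A) (ĀA)^k`, and the solution map is order preserving. -/
theorem conjugate_stein_unique_solution_series_orderPreserving
    (n : ℕ) (A : Matrix (Fin n) (Fin n) ℂ)
    (hρ : spectralRadius ℂ (mconj A * A) < 1) :
    (∀ W : Matrix (Fin n) (Fin n) ℂ, W.IsHermitian →
      ∃ X : Matrix (Fin n) (Fin n) ℂ, X.IsHermitian ∧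
        (X - Aᴴ * mconj X * A = W) ∧
        HasSum (fun k : ℕ =>
          ((mconj A * A) ^ k)ᴴ * (W + Aᴴ * mconj W * A) * (mconj A * A) ^ k) X ∧
        (∀ Y : Matrix (Fin n) (Fin n) ℂ, Y.IsHermitian →
          Y - Aᴴ * mconj Y * A = W → Y = X)) ∧
    (∀ W W' X X' : Matrix (Fin n) (Fin n) ℂ, W.IsHermitian → W'.IsHermitian →
      X.IsHermitian → X'.IsHermitian →
      X - Aᴴ * mconj X * A = W → X' - Aᴴ * mconj X' * A = W' →
      (W - W').PosSemidef → (X - X').PosSemidef) := by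
  refine ⟨fun W hW => ?_, fun W W' X X' _ _ _ _ hX hX' hWW' => ?_⟩
  · obtain ⟨X, hsum⟩ := summable_conjTranspose_pow_mul_mul_pow hρ (W + conjSandwich A W)
    have hsol : X - conjSandwich A X = W := (conjStein_iff_hasSum hρ).mpr hsum
    have hunique : ∀ Y, Y - conjSandwich A Y = W → Y = X :=
      fun Y hY => ((conjStein_iff_hasSum hρ).mp hY).unique hsum
    refine ⟨X, hunique _ ?_, hsol, hsum, fun Y _ hY => hunique Y hY⟩
    rw [← conjTranspose_conjSandwich, ← conjTranspose_sub, hsol, hW.eq]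
  · have hdiff : (X - X') - conjSandwich A (X - X') = W - W' := by
      rw [map_sub, conjSandwich_apply, conjSandwich_apply, ← hX, ← hX']
      abel
    refine PosSemidef.of_hasSum ((conjStein_iff_hasSum hρ).mp hdiff) fun k => ?_
    have hterm := hWW'.add ((posSemidef_mconj hWW').conjTranspose_mul_mul_same A)
    exact hterm.conjTranspose_mul_mul_same _

end CDARE
end
end

section
/- (Lemma 2.1) For any Hermitian X, Y ∈ ℂ^{n×n} with R_X and R_Y invertible, the identity X − R(X) = C_{T_Y}(X) − H_Y + K(Y,X) holds, where C_{T_Y}(X) = X − T_Y^H X̄ T_Y, K(Y,X) = (F_Y − F_X)^H R_X (F_Y − F_X), and H_Y = H + F_Y^H R F_Y. -/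
open Matrix Filter Topology
open scoped ComplexOrder

noncomputable section

namespace CDARE

variable {n m : ℕ}

/-- `hatM M = conj M * M`. -/
def hatM (M : Matrix (Fin n) (Fin n) ℂ) : Matrix (Fin n) (Fin n) ℂ := mconj M * M

/-- `R_X = R + Bᴴ X̄ B`. -/
def RX (R : Matrix (Fin m) (Fin m) ℂ) (B : Matrix (Fin n) (Fin m) ℂ)
    (X : Matrix (Fin n) (Fin n) ℂ) : Matrix (Fin m) (Fin m) ℂ :=
  R + Bᴴ * mconj X * B

/-- `F_X = R_X⁻¹ Bᴴ X̄ A`. -/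
def FX (A : Matrix (Fin n) (Fin n) ℂ) (B : Matrix (Fin n) (Fin m) ℂ)
    (R : Matrix (Fin m) (Fin m) ℂ) (X : Matrix (Fin n) (Fin n) ℂ) :
    Matrix (Fin m) (Fin n) ℂ :=
  (RX R B X)⁻¹ * (Bᴴ * mconj X * A)

/-- `T_X = A - B F_X`. -/
def TX (A : Matrix (Fin n) (Fin n) ℂ) (B : Matrix (Fin n) (Fin m) ℂ)
    (R : Matrix (Fin m) (Fin m) ℂ) (X : Matrix (Fin n) (Fin n) ℂ) :
    Matrix (Fin n) (Fin n) ℂ :=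
  A - B * FX A B R X

/-- The Riccati operator `R(X)`. -/
def Rop (A : Matrix (Fin n) (Fin n) ℂ) (B : Matrix (Fin n) (Fin m) ℂ)
    (R : Matrix (Fin m) (Fin m) ℂ) (H : Matrix (Fin n) (Fin n) ℂ)
    (X : Matrix (Fin n) (Fin n) ℂ) : Matrix (Fin n) (Fin n) ℂ :=
  Aᴴ * mconj X * A - Aᴴ * mconj X * B * (RX R B X)⁻¹ * (Bᴴ * mconj X * A) + H

/-- `H_X = H + F_Xᴴ R F_X`. -/
def HX (A : Matrix (Fin n) (Fin n) ℂ) (B : Matrix (Fin n) (Fin m) ℂ)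
    (R : Matrix (Fin m) (Fin m) ℂ) (H : Matrix (Fin n) (Fin n) ℂ)
    (X : Matrix (Fin n) (Fin n) ℂ) : Matrix (Fin n) (Fin n) ℂ :=
  H + (FX A B R X)ᴴ * R * FX A B R X

/-- `K(Y, X) = (F_Y - F_X)ᴴ R_X (F_Y - F_X)`. -/
def Kop (A : Matrix (Fin n) (Fin n) ℂ) (B : Matrix (Fin n) (Fin m) ℂ)
    (R : Matrix (Fin m) (Fin m) ℂ) (Y X : Matrix (Fin n) (Fin n) ℂ) :
    Matrix (Fin n) (Fin n) ℂ :=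
  (FX A B R Y - FX A B R X)ᴴ * RX R B X * (FX A B R Y - FX A B R X)

/-- Conjugate Stein operator `C_C(X) = X - Cᴴ X̄ C`. -/
def CStein (C X : Matrix (Fin n) (Fin n) ℂ) : Matrix (Fin n) (Fin n) ℂ :=
  X - Cᴴ * mconj X * C

/-- The set `S_≥`. -/
def Sge (A : Matrix (Fin n) (Fin n) ℂ) (B : Matrix (Fin n) (Fin m) ℂ)
    (R : Matrix (Fin m) (Fin m) ℂ) (H : Matrix (Fin n) (Fin n) ℂ) :
    Set (Matrix (Fin n) (Fin n) ℂ) :=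
  {X | X.IsHermitian ∧ ∃ XT : Matrix (Fin n) (Fin n) ℂ, XT.IsHermitian ∧
      IsUnit (RX R B XT) ∧ spectralRadius ℂ (hatM (TX A B R XT)) < 1 ∧
      (CStein (TX A B R XT) X - HX A B R H XT).PosSemidef}

/-
Completing the square: since `R_X` is Hermitian and `R_X F_X = Bᴴ X̄ A`, for every gain `G`
the closed-loop expression `C_{A - B G}(X) - H - Gᴴ R G` differs from `X - R(X)` exactly by
`-(G - F_X)ᴴ R_X (G - F_X)`. Lemma 2.1 is the case `G = F_Y`.
-/

section CompletingTheSquare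

variable {A : Matrix (Fin n) (Fin n) ℂ} {B : Matrix (Fin n) (Fin m) ℂ}
  {R : Matrix (Fin m) (Fin m) ℂ} {X : Matrix (Fin n) (Fin n) ℂ}

theorem isHermitian_mconj (hX : X.IsHermitian) : (mconj X).IsHermitian := by
  ext i j
  simpa [mconj] using congrArg star (congrFun₂ hX i j)

theorem isHermitian_RX (hR : R.IsHermitian) (hX : X.IsHermitian) : (RX R B X).IsHermitian :=
  hR.add (isHermitian_conjTranspose_mul_mul B (isHermitian_mconj hX))

theorem RX_mul_FX (hRX : IsUnit (RX R B X)) : RX R B X * FX A B R X = Bᴴ * mconj X * A :=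
  mul_nonsing_inv_cancel_left _ _ ((isUnit_iff_isUnit_det _).mp hRX)

theorem conjTranspose_FX_mul_RX (hR : R.IsHermitian) (hX : X.IsHermitian)
    (hRX : IsUnit (RX R B X)) : (FX A B R X)ᴴ * RX R B X = Aᴴ * mconj X * B := by
  have := congrArg conjTranspose (RX_mul_FX (A := A) hRX)
  simpa only [conjTranspose_mul, conjTranspose_conjTranspose, (isHermitian_RX hR hX).eq,
    (isHermitian_mconj hX).eq, Matrix.mul_assoc] using this

theorem Rop_eq_sub_add (H : Matrix (Fin n) (Fin n) ℂ) (hR : R.IsHermitian) (hX : X.IsHermitian)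
    (hRX : IsUnit (RX R B X)) :
    Rop A B R H X = Aᴴ * mconj X * A - (FX A B R X)ᴴ * RX R B X * FX A B R X + H := by
  rw [Rop, Matrix.mul_assoc (Aᴴ * mconj X * B), conjTranspose_FX_mul_RX hR hX hRX]
  rfl

theorem conjTranspose_sub_mul_mul_sub (G : Matrix (Fin m) (Fin n) ℂ) :
    (A - B * G)ᴴ * mconj X * (A - B * G) = Aᴴ * mconj X * A - Aᴴ * mconj X * B * G -
      Gᴴ * (Bᴴ * mconj X * A) + Gᴴ * (Bᴴ * mconj X * B) * G := by
  simp only [conjTranspose_sub, conjTranspose_mul, Matrix.sub_mul, Matrix.mul_sub,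
    Matrix.mul_assoc]
  abel

theorem sub_Rop_eq_CStein_sub_add (H : Matrix (Fin n) (Fin n) ℂ) (hR : R.IsHermitian)
    (hX : X.IsHermitian) (hRX : IsUnit (RX R B X)) (G : Matrix (Fin m) (Fin n) ℂ) :
    X - Rop A B R H X = CStein (A - B * G) X - (H + Gᴴ * R * G) +
      (G - FX A B R X)ᴴ * RX R B X * (G - FX A B R X) := by
  have hBXB : Bᴴ * mconj X * B = RX R B X - R := (add_sub_cancel_left R _).symm
  rw [Rop_eq_sub_add H hR hX hRX, CStein, conjTranspose_sub_mul_mul_sub,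
    ← conjTranspose_FX_mul_RX hR hX hRX, ← RX_mul_FX hRX, hBXB, conjTranspose_sub]
  simp only [Matrix.sub_mul, Matrix.mul_sub, Matrix.mul_assoc]
  abel

end CompletingTheSquare

theorem lemma_2_1_general (n m : ℕ) (A : Matrix (Fin n) (Fin n) ℂ) (B : Matrix (Fin n) (Fin m) ℂ)
    (R : Matrix (Fin m) (Fin m) ℂ) (H : Matrix (Fin n) (Fin n) ℂ)
    (hR : R.IsHermitian)
    (X Y : Matrix (Fin n) (Fin n) ℂ) (hX : X.IsHermitian)
    (hRX : IsUnit (RX R B X)) :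
    X - Rop A B R H X =
      CStein (TX A B R Y) X - HX A B R H Y + Kop A B R Y X :=
  sub_Rop_eq_CStein_sub_add H hR hX hRX (FX A B R Y)

/-- Lemma 2.1: `X - R(X) = C_{T_Y}(X) - H_Y + K(Y, X)`. -/
theorem lemma_2_1 (n m : ℕ) (A : Matrix (Fin n) (Fin n) ℂ) (B : Matrix (Fin n) (Fin m) ℂ)
    (R : Matrix (Fin m) (Fin m) ℂ) (H : Matrix (Fin n) (Fin n) ℂ)
    (hR : R.IsHermitian) (hRunit : IsUnit R) (hH : H.IsHermitian)
    (X Y : Matrix (Fin n) (Fin n) ℂ) (hX : X.IsHermitian) (hY : Y.IsHermitian)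
    (hRX : IsUnit (RX R B X)) (hRY : IsUnit (RX R B Y)) :
    X - Rop A B R H X =
      CStein (TX A B R Y) X - HX A B R H Y + Kop A B R Y X :=
  lemma_2_1_general n m A B R H hR X Y hX hRX

end CDARE
end
end

section
/- For any Hermitian X ∈ ℂ^{n×n} with R_X invertible, one has the alternative expressions T_X = (I + G X̄)^{-1} A (in particular I + G X̄ is invertible) and R(X) = A^H X̄ T_X + H = T_X^H X̄ A + H, where G := B R^{-1} B^H. -/
open Matrix Filter Topology
open scoped ComplexOrder

noncomputable section

namespace CDARE

variable {n m : ℕ}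

/-! With `V = Bᴴ X̄`, the push-through identity `(I + B R⁻¹ V) B = B R⁻¹ (R + V B) = B R⁻¹ R_X`
shows that `I - B R_X⁻¹ V` is a right inverse of `I + G X̄` (a Woodbury-type formula), and
`T_X = (I - B R_X⁻¹ V) A`. The two expressions for `R(X)` are conjugate transposes of each other's
correction terms, which agree because `X̄` and `R_X` are Hermitian. -/

section PushThrough

variable {k l α : Type*} [Fintype k] [DecidableEq k] [Fintype l] [DecidableEq l] [CommRing α]
  {U : Matrix l k α} {V : Matrix k l α} {R : Matrix k k α}

theorem one_add_mul_inv_mul_mul (hR : IsUnit R) :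
    (1 + U * R⁻¹ * V) * U = U * R⁻¹ * (R + V * U) := by
  rw [Matrix.add_mul, Matrix.one_mul, Matrix.mul_add,
    Matrix.nonsing_inv_mul_cancel_right _ _ ((isUnit_iff_isUnit_det R).mp hR),
    Matrix.mul_assoc _ V U]

theorem one_add_mul_inv_mul_mul_one_sub (hR : IsUnit R) (hS : IsUnit (R + V * U)) :
    (1 + U * R⁻¹ * V) * (1 - U * (R + V * U)⁻¹ * V) = 1 := by
  rw [Matrix.mul_sub, Matrix.mul_one, ← Matrix.mul_assoc, ← Matrix.mul_assoc,
    one_add_mul_inv_mul_mul hR,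
    Matrix.mul_nonsing_inv_cancel_right _ _ ((isUnit_iff_isUnit_det _).mp hS), add_sub_cancel_right]

theorem isUnit_one_add_mul_inv_mul (hR : IsUnit R) (hS : IsUnit (R + V * U)) :
    IsUnit (1 + U * R⁻¹ * V) :=
  (isUnit_iff_isUnit_det _).mpr
    (isUnit_det_of_right_inverse (one_add_mul_inv_mul_mul_one_sub hR hS))

theorem inv_one_add_mul_inv_mul (hR : IsUnit R) (hS : IsUnit (R + V * U)) :
    (1 + U * R⁻¹ * V)⁻¹ = 1 - U * (R + V * U)⁻¹ * V :=
  Matrix.inv_eq_right_inv (one_add_mul_inv_mul_mul_one_sub hR hS)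

end PushThrough

theorem mconj_isHermitian {X : Matrix (Fin n) (Fin n) ℂ} (hX : X.IsHermitian) :
    (mconj X).IsHermitian :=
  hX.map _ fun _ => rfl

theorem RX_isHermitian {R : Matrix (Fin m) (Fin m) ℂ} {X : Matrix (Fin n) (Fin n) ℂ}
    (B : Matrix (Fin n) (Fin m) ℂ) (hR : R.IsHermitian) (hX : X.IsHermitian) :
    (RX R B X).IsHermitian :=
  hR.add (isHermitian_conjTranspose_mul_mul B (mconj_isHermitian hX))

theorem TX_eq_sub_mul (A : Matrix (Fin n) (Fin n) ℂ) (B : Matrix (Fin n) (Fin m) ℂ)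
    (R : Matrix (Fin m) (Fin m) ℂ) (X : Matrix (Fin n) (Fin n) ℂ) :
    TX A B R X = (1 - B * (RX R B X)⁻¹ * (Bᴴ * mconj X)) * A := by
  simp only [TX, FX, Matrix.sub_mul, Matrix.one_mul, Matrix.mul_assoc]

theorem Rop_eq_mul_TX_add (A : Matrix (Fin n) (Fin n) ℂ) (B : Matrix (Fin n) (Fin m) ℂ)
    (R : Matrix (Fin m) (Fin m) ℂ) (H X : Matrix (Fin n) (Fin n) ℂ) :
    Rop A B R H X = Aᴴ * mconj X * TX A B R X + H := by
  simp only [Rop, TX, FX, Matrix.mul_sub, Matrix.mul_assoc]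

theorem Rop_eq_TX_conjTranspose_mul_add {R : Matrix (Fin m) (Fin m) ℂ}
    {X : Matrix (Fin n) (Fin n) ℂ}
    (A : Matrix (Fin n) (Fin n) ℂ) (B : Matrix (Fin n) (Fin m) ℂ) (H : Matrix (Fin n) (Fin n) ℂ)
    (hR : R.IsHermitian) (hX : X.IsHermitian) :
    Rop A B R H X = (TX A B R X)ᴴ * mconj X * A + H := by
  have hRXinv : ((RX R B X)⁻¹)ᴴ = (RX R B X)⁻¹ := by
    rw [Matrix.conjTranspose_nonsing_inv, (RX_isHermitian B hR hX).eq]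
  simp only [Rop, TX, FX, Matrix.conjTranspose_sub, Matrix.conjTranspose_mul,
    Matrix.conjTranspose_conjTranspose, (mconj_isHermitian hX).eq, hRXinv, Matrix.sub_mul,
    Matrix.mul_assoc]

theorem TX_Rop_alternative_expressions_general
    (n m : ℕ) (A : Matrix (Fin n) (Fin n) ℂ) (B : Matrix (Fin n) (Fin m) ℂ)
    (R : Matrix (Fin m) (Fin m) ℂ) (H : Matrix (Fin n) (Fin n) ℂ)
    (hR : R.IsHermitian) (hRunit : IsUnit R)
    (X : Matrix (Fin n) (Fin n) ℂ) (hX : X.IsHermitian)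
    (hRX : IsUnit (RX R B X)) :
    IsUnit (1 + B * R⁻¹ * Bᴴ * mconj X) ∧
    TX A B R X = (1 + B * R⁻¹ * Bᴴ * mconj X)⁻¹ * A ∧
    Rop A B R H X = Aᴴ * mconj X * TX A B R X + H ∧
    Rop A B R H X = (TX A B R X)ᴴ * mconj X * A + H := by
  rw [Matrix.mul_assoc (B * R⁻¹) Bᴴ]
  exact ⟨isUnit_one_add_mul_inv_mul hRunit hRX,
    by rw [inv_one_add_mul_inv_mul hRunit hRX, TX_eq_sub_mul]; rfl,
    Rop_eq_mul_TX_add A B R H X, Rop_eq_TX_conjTranspose_mul_add A B H hR hX⟩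

/-- Alternative expressions: `T_X = (I + G X̄)⁻¹ A` (with `I + G X̄` invertible) and
`R(X) = Aᴴ X̄ T_X + H = T_Xᴴ X̄ A + H`, where `G = B R⁻¹ Bᴴ`. -/
theorem TX_Rop_alternative_expressions
    (n m : ℕ) (A : Matrix (Fin n) (Fin n) ℂ) (B : Matrix (Fin n) (Fin m) ℂ)
    (R : Matrix (Fin m) (Fin m) ℂ) (H : Matrix (Fin n) (Fin n) ℂ)
    (hR : R.IsHermitian) (hRunit : IsUnit R) (hH : H.IsHermitian)
    (X : Matrix (Fin n) (Fin n) ℂ) (hX : X.IsHermitian)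
    (hRX : IsUnit (RX R B X)) :
    IsUnit (1 + B * R⁻¹ * Bᴴ * mconj X) ∧
    TX A B R X = (1 + B * R⁻¹ * Bᴴ * mconj X)⁻¹ * A ∧
    Rop A B R H X = Aᴴ * mconj X * TX A B R X + H ∧
    Rop A B R H X = (TX A B R X)ᴴ * mconj X * A + H :=
  TX_Rop_alternative_expressions_general n m A B R H hR hRunit X hX hRX

end CDARE
end
end

section
/- (Lemma 3.1) Let X_T be Hermitian with R_{X_T} invertible and ρ(T̂_{X_T}) < 1, where T̂ := T̄T. Suppose X is Hermitian with R_X positive definite, and Y is a positive semidefinite Hermitian matrix satisfying C_{T_X}(Y) ≥ K(X_T, X) in the Loewner order. Then ρ(T̂_X) < 1. -/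
open Matrix Filter Topology
open scoped ComplexOrder

noncomputable section

namespace CDARE

variable {n m : ℕ}

/-!
Suppose `T̂_X u = μ u` with `u ≠ 0` and `|μ| ≥ 1`, and put `D := F_{X_T} - F_X`, `w := conj (T_X u)`,
so that `T_X w = conj (μ u)`. The hypothesis says `v*Yv ≥ (conj (T_X v))* Y conj (T_X v) + (Dv)* R_X (Dv)`
for every `v`. At `v = w` and `v = u` this gives
`u*Yu ≥ w*Yw + (Du)* R_X (Du) ≥ |μ|² u*Yu + (Dw)* R_X (Dw) + (Du)* R_X (Du)`,
so `R_X > 0` forces `Du = Dw = 0`. As `T_{X_T} = T_X - B D`, the matrices `T_{X_T}` and `T_X` agree on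
`u` and `w`, hence `T̂_{X_T} u = μ u`, contradicting `ρ(T̂_{X_T}) < 1`.
-/

open scoped NNReal ENNReal

theorem _root_.Matrix.mem_spectrum_iff_exists_mulVec_eq_smul {K ι : Type*} [Field K] [Fintype ι]
    [DecidableEq ι] {M : Matrix ι ι K} {μ : K} :
    μ ∈ spectrum K M ↔ ∃ v, v ≠ 0 ∧ M *ᵥ v = μ • v := by
  rw [← spectrum_toLin', ← Module.End.hasEigenvalue_iff_mem_spectrum,
    Module.End.hasEigenvalue_iff, Submodule.ne_bot_iff]
  simp only [Module.End.mem_eigenspace_iff, toLin'_apply, and_comm]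

theorem _root_.Matrix.spectralRadius_lt_of_forall_nnnorm_lt {𝕜 ι : Type*} [NormedField 𝕜]
    [Fintype ι] [DecidableEq ι] (M : Matrix ι ι 𝕜) {r : ℝ≥0} (hr : 0 < r)
    (h : ∀ μ ∈ spectrum 𝕜 M, ‖μ‖₊ < r) : spectralRadius 𝕜 M < r := by
  obtain he | hne := (spectrum 𝕜 M).eq_empty_or_nonempty
  · simpa [spectralRadius, he] using hr
  · obtain ⟨μ, hμ, hmax⟩ := Set.exists_max_image _ (‖·‖₊) (Matrix.finite_spectrum M) hne
    exact (iSup₂_le fun k hk => ENNReal.coe_le_coe.mpr (hmax k hk)).trans_lt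
      (ENNReal.coe_lt_coe.mpr (h μ hμ))

theorem _root_.Matrix.star_dotProduct_conjTranspose_mul_mul_mulVec {R ι κ : Type*} [CommRing R]
    [StarRing R] [Fintype ι] [Fintype κ] (A : Matrix ι κ R) (N : Matrix ι ι R) (v : κ → R) :
    star v ⬝ᵥ ((Aᴴ * N * A) *ᵥ v) = star (A *ᵥ v) ⬝ᵥ (N *ᵥ (A *ᵥ v)) := by
  rw [← mulVec_mulVec, ← mulVec_mulVec, dotProduct_mulVec, ← star_mulVec]

lemma mconj_mulVec {p q : ℕ} (M : Matrix (Fin p) (Fin q) ℂ) (v : Fin q → ℂ) :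
    mconj M *ᵥ v = star (M *ᵥ star v) := by
  funext i
  simp [mconj, mulVec, dotProduct]

lemma star_dotProduct_mconj_mulVec {Y : Matrix (Fin n) (Fin n) ℂ} (hY : Y.IsHermitian)
    (z : Fin n → ℂ) : star z ⬝ᵥ (mconj Y *ᵥ z) = star (star z) ⬝ᵥ (Y *ᵥ star z) := by
  rw [mconj_mulVec, star_dotProduct_star, dotProduct_comm, star_dotProduct, star_mulVec, hY.eq,
    ← dotProduct_mulVec, star_star]

lemma TX_eq_TX_sub_mul (A : Matrix (Fin n) (Fin n) ℂ) (B : Matrix (Fin n) (Fin m) ℂ)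
    (R : Matrix (Fin m) (Fin m) ℂ) (X Y : Matrix (Fin n) (Fin n) ℂ) :
    TX A B R Y = TX A B R X - B * (FX A B R Y - FX A B R X) := by
  simp only [TX, Matrix.mul_sub]
  abel

lemma hatM_sub_mul_mulVec_eq {T : Matrix (Fin n) (Fin n) ℂ} (B : Matrix (Fin n) (Fin m) ℂ)
    {D : Matrix (Fin m) (Fin n) ℂ} {u : Fin n → ℂ} (hu : D *ᵥ u = 0)
    (hw : D *ᵥ star (T *ᵥ u) = 0) : hatM (T - B * D) *ᵥ u = hatM T *ᵥ u := by
  have agree : ∀ v, D *ᵥ v = 0 → (T - B * D) *ᵥ v = T *ᵥ v := fun v hv => by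
    rw [sub_mulVec, ← mulVec_mulVec, hv, mulVec_zero, sub_zero]
  simp only [hatM, ← mulVec_mulVec, mconj_mulVec, agree u hu, agree _ hw]

section Stein

variable {T Y : Matrix (Fin n) (Fin n) ℂ} {D : Matrix (Fin m) (Fin n) ℂ}
  {P : Matrix (Fin m) (Fin m) ℂ}

lemma dotProduct_mulVec_add_le_of_cStein_sub_posSemidef (hY : Y.IsHermitian)
    (h : (CStein T Y - Dᴴ * P * D).PosSemidef) (v : Fin n → ℂ) :
    star (star (T *ᵥ v)) ⬝ᵥ (Y *ᵥ star (T *ᵥ v)) + star (D *ᵥ v) ⬝ᵥ (P *ᵥ (D *ᵥ v))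
      ≤ star v ⬝ᵥ (Y *ᵥ v) := by
  have hv := h.dotProduct_mulVec_nonneg v
  rw [CStein, sub_sub, sub_mulVec, add_mulVec, dotProduct_sub, dotProduct_add,
    star_dotProduct_conjTranspose_mul_mul_mulVec, star_dotProduct_conjTranspose_mul_mul_mulVec,
    star_dotProduct_mconj_mulVec hY, sub_nonneg] at hv
  exact hv

lemma mulVec_eq_zero_of_hatM_mulVec_eq_smul (hY : Y.PosSemidef) (hP : P.PosDef)
    (h : (CStein T Y - Dᴴ * P * D).PosSemidef) {u : Fin n → ℂ} {μ : ℂ}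
    (hu : hatM T *ᵥ u = μ • u) (hμ : 1 ≤ ‖μ‖) : D *ᵥ u = 0 ∧ D *ᵥ star (T *ᵥ u) = 0 := by
  set w := star (T *ᵥ u)
  have hTw : star (T *ᵥ w) = μ • u := by
    rw [← hu, hatM, ← mulVec_mulVec, mconj_mulVec]
  have h₁ := dotProduct_mulVec_add_le_of_cStein_sub_posSemidef hY.isHermitian h u
  have h₂ := dotProduct_mulVec_add_le_of_cStein_sub_posSemidef hY.isHermitian h w
  have quad_smul : star (μ • u) ⬝ᵥ (Y *ᵥ (μ • u)) = (‖μ‖ ^ 2 : ℂ) * (star u ⬝ᵥ (Y *ᵥ u)) := by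
    rw [star_smul, mulVec_smul, smul_dotProduct, dotProduct_smul, smul_smul, smul_eq_mul,
      Complex.star_def, Complex.conj_mul']
  have growth : star u ⬝ᵥ (Y *ᵥ u) ≤ (‖μ‖ ^ 2 : ℂ) * (star u ⬝ᵥ (Y *ᵥ u)) :=
    le_mul_of_one_le_left (hY.dotProduct_mulVec_nonneg u) (by exact_mod_cast one_le_pow₀ hμ)
  rw [hTw, quad_smul] at h₂
  have hsum : star (D *ᵥ u) ⬝ᵥ (P *ᵥ (D *ᵥ u)) + star (D *ᵥ w) ⬝ᵥ (P *ᵥ (D *ᵥ w)) ≤ 0 := by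
    linear_combination h₁ + h₂ + growth
  have eq_zero : ∀ v, star v ⬝ᵥ (P *ᵥ v) ≤ 0 → v = 0 := fun v hv =>
    by_contra fun hne => (hP.dotProduct_mulVec_pos hne).not_ge hv
  have nonneg := hP.posSemidef.dotProduct_mulVec_nonneg
  exact ⟨eq_zero _ ((le_add_of_nonneg_right (nonneg _)).trans hsum),
    eq_zero _ ((le_add_of_nonneg_left (nonneg _)).trans hsum)⟩

end Stein

theorem lemma_3_1_general (n m : ℕ) (A : Matrix (Fin n) (Fin n) ℂ) (B : Matrix (Fin n) (Fin m) ℂ)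
    (R : Matrix (Fin m) (Fin m) ℂ)
    (XT : Matrix (Fin n) (Fin n) ℂ)
    (hρT : spectralRadius ℂ (hatM (TX A B R XT)) < 1)
    (X : Matrix (Fin n) (Fin n) ℂ)
    (hRXpd : (RX R B X).PosDef)
    (Y : Matrix (Fin n) (Fin n) ℂ) (hY : Y.PosSemidef)
    (hineq : (CStein (TX A B R X) Y - Kop A B R XT X).PosSemidef) :
    spectralRadius ℂ (hatM (TX A B R X)) < 1 := by
  refine Matrix.spectralRadius_lt_of_forall_nnnorm_lt _ one_pos fun μ hμ => ?_
  by_contra! hμ1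
  obtain ⟨u, hu0, hu⟩ := mem_spectrum_iff_exists_mulVec_eq_smul.mp hμ
  obtain ⟨hDu, hDw⟩ :=
    mulVec_eq_zero_of_hatM_mulVec_eq_smul hY hRXpd hineq hu (by exact_mod_cast hμ1)
  have hμT : μ ∈ spectrum ℂ (hatM (TX A B R XT)) := by
    rw [TX_eq_TX_sub_mul A B R X XT]
    exact mem_spectrum_iff_exists_mulVec_eq_smul.mpr
      ⟨u, hu0, (hatM_sub_mul_mulVec_eq B hDu hDw).trans hu⟩
  exact hμ1.not_gt (ENNReal.coe_lt_one_iff.mp ((le_iSup₂ (α := ℝ≥0∞) μ hμT).trans_lt hρT))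

/-- Lemma 3.1: stability of the closed-loop matrix. -/
theorem lemma_3_1 (n m : ℕ) (A : Matrix (Fin n) (Fin n) ℂ) (B : Matrix (Fin n) (Fin m) ℂ)
    (R : Matrix (Fin m) (Fin m) ℂ) (H : Matrix (Fin n) (Fin n) ℂ)
    (hR : R.IsHermitian) (hRunit : IsUnit R) (hH : H.IsHermitian)
    (XT : Matrix (Fin n) (Fin n) ℂ) (hXT : XT.IsHermitian)
    (hRXT : IsUnit (RX R B XT))
    (hρT : spectralRadius ℂ (hatM (TX A B R XT)) < 1)
    (X : Matrix (Fin n) (Fin n) ℂ) (hX : X.IsHermitian)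
    (hRXpd : (RX R B X).PosDef)
    (Y : Matrix (Fin n) (Fin n) ℂ) (hY : Y.PosSemidef)
    (hineq : (CStein (TX A B R X) Y - Kop A B R XT X).PosSemidef) :
    spectralRadius ℂ (hatM (TX A B R X)) < 1 :=
  lemma_3_1_general n m A B R XT hρT X hRXpd Y hY hineq

end CDARE
end
end

section
/- For any Hermitian X with R_X invertible such that X' := R(X) also has R_{X'} invertible, the identity C_{T_X}(X') − H_X = T_X^H (conj(X − X')) T_X holds; in particular, if X ≥ X' then C_{T_X}(X') − H_X is positive semidefinite. -/
open Matrix Filter Topology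
open scoped ComplexOrder

noncomputable section

namespace CDARE

variable {n m : ℕ}

/-- `C_{T_X}(R(X)) - H_X = T_Xᴴ (conj (X - R(X))) T_X`; in particular, if `X ≥ R(X)` then
`C_{T_X}(R(X)) - H_X` is positive semidefinite. -/
theorem cstein_Rop_identity (n m : ℕ) (A : Matrix (Fin n) (Fin n) ℂ)
    (B : Matrix (Fin n) (Fin m) ℂ)
    (R : Matrix (Fin m) (Fin m) ℂ) (H : Matrix (Fin n) (Fin n) ℂ)
    (hR : R.IsHermitian) (hRunit : IsUnit R) (hH : H.IsHermitian)
    (X : Matrix (Fin n) (Fin n) ℂ) (hX : X.IsHermitian)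
    (hRX : IsUnit (RX R B X)) (hRX' : IsUnit (RX R B (Rop A B R H X))) :
    CStein (TX A B R X) (Rop A B R H X) - HX A B R H X =
      (TX A B R X)ᴴ * mconj (X - Rop A B R H X) * TX A B R X ∧
    ((X - Rop A B R H X).PosSemidef →
      (CStein (TX A B R X) (Rop A B R H X) - HX A B R H X).PosSemidef) := by
  have hdet : IsUnit (RX R B X).det := (Matrix.isUnit_iff_isUnit_det _).mp hRX
  have hkey : RX R B X * FX A B R X = Bᴴ * mconj X * A := by
    rw [FX, Matrix.mul_nonsing_inv_cancel_left _ _ hdet]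
  have hBSB : Bᴴ * mconj X * B = RX R B X - R := by
    simp [RX]
  have hmain : CStein (TX A B R X) (Rop A B R H X) - HX A B R H X =
      (TX A B R X)ᴴ * mconj (X - Rop A B R H X) * TX A B R X := by
    have hsub : mconj (X - Rop A B R H X) = mconj X - mconj (Rop A B R H X) := by
      simp [mconj, Matrix.map_sub]
    set F := FX A B R X with hF
    set S := mconj X with hS
    have hX' : Rop A B R H X = Aᴴ * S * A - Aᴴ * S * B * F + H := by
      rw [Rop, hF, FX, hS]
      simp only [Matrix.mul_assoc]
    have hkey' : RX R B X * F = Bᴴ * (S * A) := by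
      rw [hkey, Matrix.mul_assoc]
    have hFRXF : Fᴴ * (Bᴴ * (S * (B * F))) = Fᴴ * (Bᴴ * (S * A)) - Fᴴ * (R * F) := by
      calc Fᴴ * (Bᴴ * (S * (B * F))) = Fᴴ * ((Bᴴ * S * B) * F) := by
            simp only [Matrix.mul_assoc]
        _ = Fᴴ * (RX R B X * F - R * F) := by rw [hBSB, Matrix.sub_mul]
        _ = Fᴴ * (Bᴴ * (S * A)) - Fᴴ * (R * F) := by rw [hkey', Matrix.mul_sub]
    rw [CStein, HX, TX, hsub, hX']
    simp only [Matrix.conjTranspose_sub, Matrix.conjTranspose_mul, Matrix.sub_mul,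
      Matrix.mul_sub, Matrix.mul_assoc]
    rw [hFRXF]
    abel
  refine ⟨hmain, fun hP => ?_⟩
  rw [hmain]
  have hconj : mconj (X - Rop A B R H X) = (X - Rop A B R H X)ᵀ := by
    have h1 := hP.1
    rw [Matrix.IsHermitian] at h1
    calc mconj (X - Rop A B R H X)
        = ((X - Rop A B R H X)ᴴ)ᵀ := rfl
      _ = (X - Rop A B R H X)ᵀ := by rw [h1]
  rw [hconj]
  exact (hP.transpose).conjTranspose_mul_mul_same _


end CDARE
end
end

section
/- (Scalar CDARE, trichotomy of the multipliers) Let a > 0, g > 0, h ∈ ℝ, D := (1 − a² − g·h)² + 4·g·h, h_M := −(1−a)²/g, h_m := −(1+a)²/g, and for D ≥ 0 let x_M, x_m be the larger and smaller roots of g·x² + (1 − a² − g·h)·x − h = 0 and t̂_x := a²/(1+gx)². Then: if h > h_M then t̂_{x_M} < 1 < t̂_{x_m}; if h = h_M or h = h_m then t̂_{x_M} = t̂_{x_m} = 1; if h < h_m then t̂_{x_M} > 1 > t̂_{x_m}. -/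
/-!
Substitute `q := 1 + g x`. The CDARE becomes `q² - s q + a² = 0` with `s := 1 + a² + g h`, so
`1 + g x_M` and `1 + g x_m` are the upper and lower roots of this monic quadratic and, when they are
real, their product is `a²`. Hence `t̂_{x_M} = q_m / q_M` and `t̂_{x_m} = q_M / q_m`. The thresholds
`h_M`, `h_m` are exactly `s = 2a` and `s = -2a`: beyond them the roots are real, distinct and share the
sign of `s`, which places the two ratios on opposite sides of `1`; at them the roots coincide.
-/

open Real

theorem div_sq_eq_div_of_mul_eq {K : Type*} [Field K] {c p q : K} (h : p * q = c) (hp : p ≠ 0) :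
    c / p ^ 2 = q / p := by
  rw [← h]
  field_simp

/-- With `lowerRoot`, the roots of `X² - s X + c`; only meaningful when `4 c ≤ s²`, since `√`
of a negative number is `0`. -/
noncomputable def upperRoot (s c : ℝ) : ℝ := (s + √(s ^ 2 - 4 * c)) / 2

noncomputable def lowerRoot (s c : ℝ) : ℝ := (s - √(s ^ 2 - 4 * c)) / 2

section Roots

variable {s c : ℝ}

theorem upperRoot_mul_lowerRoot (h : 4 * c ≤ s ^ 2) : upperRoot s c * lowerRoot s c = c := by
  have hsq : √(s ^ 2 - 4 * c) ^ 2 = s ^ 2 - 4 * c := sq_sqrt (by linarith)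
  unfold upperRoot lowerRoot
  linear_combination -hsq / 4

theorem lowerRoot_lt_upperRoot (h : 4 * c < s ^ 2) : lowerRoot s c < upperRoot s c := by
  have : 0 < √(s ^ 2 - 4 * c) := sqrt_pos.mpr (by linarith)
  unfold upperRoot lowerRoot
  linarith

theorem lowerRoot_eq_upperRoot (h : s ^ 2 = 4 * c) : lowerRoot s c = upperRoot s c := by
  simp [upperRoot, lowerRoot, h]

theorem upperRoot_neg : upperRoot (-s) c = -lowerRoot s c := by
  simp only [upperRoot, lowerRoot, neg_sq]
  ring

theorem lowerRoot_neg : lowerRoot (-s) c = -upperRoot s c := by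
  simp only [upperRoot, lowerRoot, neg_sq]
  ring

theorem upperRoot_pos (hs : 0 < s) : 0 < upperRoot s c := by
  unfold upperRoot
  positivity

theorem lowerRoot_pos (hc : 0 < c) (hs : 0 < s) (h : 4 * c ≤ s ^ 2) : 0 < lowerRoot s c :=
  pos_of_mul_pos_right ((upperRoot_mul_lowerRoot h).symm ▸ hc) (upperRoot_pos hs).le

theorem div_sq_upperRoot_eq (hc : c ≠ 0) (h : 4 * c ≤ s ^ 2) :
    c / upperRoot s c ^ 2 = lowerRoot s c / upperRoot s c :=
  div_sq_eq_div_of_mul_eq (upperRoot_mul_lowerRoot h)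
    (left_ne_zero_of_mul ((upperRoot_mul_lowerRoot h).symm ▸ hc))

theorem div_sq_lowerRoot_eq (hc : c ≠ 0) (h : 4 * c ≤ s ^ 2) :
    c / lowerRoot s c ^ 2 = upperRoot s c / lowerRoot s c :=
  div_sq_eq_div_of_mul_eq ((mul_comm _ _).trans (upperRoot_mul_lowerRoot h))
    (right_ne_zero_of_mul ((upperRoot_mul_lowerRoot h).symm ▸ hc))

theorem div_sq_upperRoot_lt_one_and_one_lt_div_sq_lowerRoot (hc : 0 < c) (hs : 0 < s)
    (h : 4 * c < s ^ 2) :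
    c / upperRoot s c ^ 2 < 1 ∧ 1 < c / lowerRoot s c ^ 2 := by
  have hlt := lowerRoot_lt_upperRoot h
  have hpos := lowerRoot_pos hc hs h.le
  rw [div_sq_upperRoot_eq hc.ne' h.le, div_sq_lowerRoot_eq hc.ne' h.le]
  exact ⟨(div_lt_one (hpos.trans hlt)).mpr hlt, (one_lt_div hpos).mpr hlt⟩

theorem one_lt_div_sq_upperRoot_and_div_sq_lowerRoot_lt_one (hc : 0 < c) (hs : s < 0)
    (h : 4 * c < s ^ 2) :
    1 < c / upperRoot s c ^ 2 ∧ c / lowerRoot s c ^ 2 < 1 := by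
  have := div_sq_upperRoot_lt_one_and_one_lt_div_sq_lowerRoot hc (neg_pos.mpr hs) (by rwa [neg_sq])
  rwa [upperRoot_neg, lowerRoot_neg, neg_sq, neg_sq, and_comm] at this

theorem div_sq_upperRoot_eq_one_and_div_sq_lowerRoot_eq_one (hc : c ≠ 0) (h : s ^ 2 = 4 * c) :
    c / upperRoot s c ^ 2 = 1 ∧ c / lowerRoot s c ^ 2 = 1 := by
  have hne : upperRoot s c ≠ 0 := left_ne_zero_of_mul ((upperRoot_mul_lowerRoot h.ge).symm ▸ hc)
  rw [div_sq_upperRoot_eq hc h.ge, div_sq_lowerRoot_eq hc h.ge, lowerRoot_eq_upperRoot h]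
  exact ⟨div_self hne, div_self hne⟩

end Roots

theorem one_add_mul_cdare_root_eq_upperRoot {a g h : ℝ} (hg : g ≠ 0) :
    1 + g * ((-(1 - a ^ 2 - g * h) + √((1 - a ^ 2 - g * h) ^ 2 + 4 * g * h)) / (2 * g)) =
      upperRoot (1 + a ^ 2 + g * h) (a ^ 2) := by
  rw [upperRoot,
    show (1 - a ^ 2 - g * h) ^ 2 + 4 * g * h = (1 + a ^ 2 + g * h) ^ 2 - 4 * a ^ 2 by ring]
  field_simp
  ring

theorem one_add_mul_cdare_root_eq_lowerRoot {a g h : ℝ} (hg : g ≠ 0) :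
    1 + g * ((-(1 - a ^ 2 - g * h) - √((1 - a ^ 2 - g * h) ^ 2 + 4 * g * h)) / (2 * g)) =
      lowerRoot (1 + a ^ 2 + g * h) (a ^ 2) := by
  rw [lowerRoot,
    show (1 - a ^ 2 - g * h) ^ 2 + 4 * g * h = (1 + a ^ 2 + g * h) ^ 2 - 4 * a ^ 2 by ring]
  field_simp
  ring

section Thresholds

variable {K : Type*} [Field K] [LinearOrder K] [IsStrictOrderedRing K] {b g h : K}

theorem neg_sq_div_lt_iff (hg : 0 < g) : -b ^ 2 / g < h ↔ 0 < b ^ 2 + g * h := by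
  rw [div_lt_iff₀ hg]
  constructor <;> intro <;> linarith

theorem lt_neg_sq_div_iff (hg : 0 < g) : h < -b ^ 2 / g ↔ b ^ 2 + g * h < 0 := by
  rw [lt_div_iff₀ hg]
  constructor <;> intro <;> linarith

theorem eq_neg_sq_div_iff (hg : 0 < g) : h = -b ^ 2 / g ↔ b ^ 2 + g * h = 0 := by
  rw [eq_div_iff hg.ne']
  constructor <;> intro <;> linarith

end Thresholds

/-- Scalar CDARE, trichotomy of the multipliers. -/
theorem scalar_cdare_multiplier_trichotomy (a g h : ℝ) (ha : 0 < a) (hg : 0 < g) :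
    let D : ℝ := (1 - a ^ 2 - g * h) ^ 2 + 4 * g * h
    let hM : ℝ := -(1 - a) ^ 2 / g
    let hm : ℝ := -(1 + a) ^ 2 / g
    let xM : ℝ := (-(1 - a ^ 2 - g * h) + Real.sqrt D) / (2 * g)
    let xm : ℝ := (-(1 - a ^ 2 - g * h) - Real.sqrt D) / (2 * g)
    let tM : ℝ := a ^ 2 / (1 + g * xM) ^ 2
    let tm : ℝ := a ^ 2 / (1 + g * xm) ^ 2
    (h > hM → tM < 1 ∧ 1 < tm) ∧
    ((h = hM ∨ h = hm) → tM = 1 ∧ tm = 1) ∧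
    (h < hm → tM > 1 ∧ 1 > tm) := by
  intro D hM hm xM xm tM tm
  have ha2 : 0 < a ^ 2 := by positivity
  simp only [tM, tm, xM, xm, D, hM, hm, one_add_mul_cdare_root_eq_upperRoot hg.ne',
    one_add_mul_cdare_root_eq_lowerRoot hg.ne']
  refine ⟨fun hh => ?_, fun hh => ?_, fun hh => ?_⟩
  · rw [gt_iff_lt, neg_sq_div_lt_iff hg] at hh
    exact div_sq_upperRoot_lt_one_and_one_lt_div_sq_lowerRoot ha2 (by nlinarith) (by nlinarith)
  · refine div_sq_upperRoot_eq_one_and_div_sq_lowerRoot_eq_one ha2.ne' ?_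
    rcases hh with hh | hh <;> rw [eq_neg_sq_div_iff hg] at hh
    · linear_combination (1 + a ^ 2 + g * h + 2 * a) * hh
    · linear_combination (1 + a ^ 2 + g * h - 2 * a) * hh
  · rw [lt_neg_sq_div_iff hg] at hh
    exact one_lt_div_sq_upperRoot_and_div_sq_lowerRoot_lt_one ha2 (by nlinarith) (by nlinarith)
end

section
/- (Scalar FPI, closed form for distinct roots) Let a > 0, g > 0, h > h_M := −(1−a)²/g, with roots x_m < x_M of g·x² + (1 − a² − g·h)·x − h = 0 and t̂ := a²/(1+g·x_M)², so 0 < t̂ < 1. Let x_0 > x_M and define x_{k+1} := a²·x_k/(1 + g·x_k) + h. Then each x_k is well-defined (1 + g·x_k > 0) and for all k ≥ 0, x_k = x_M + (x_M − x_m)/(s·t̂^{−k} − 1), where s := (x_0 − x_m)/(x_0 − x_M). -/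
/-!
The CDARE map `f y = a²y/(1+gy) + h` is a Möbius transformation whose fixed points are the roots
`x_M > x_m` of `g x² + (1 - a² - gh) x - h`. By Vieta, `f y - x_M = (1+g x_m)(y - x_M)/(1+gy)` and
symmetrically, so in the coordinate `φ y = (y - x_m)/(y - x_M)` the iteration is multiplication by
`(1+g x_M)/(1+g x_m) = t̂⁻¹`, giving `φ(x_k) = s t̂^{-k}`; solving `φ(x_k)` for `x_k` is the closed
form. When `h > h_M` both `1 + g x_M` and `1 + g x_m` are positive (their product is `a²` and their
sum `1 + a² + gh > 2a`), which yields `0 < t̂ < 1` and keeps the orbit above `x_M`.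
-/

def cdareMap {K : Type*} [Field K] (a g h y : K) : K := a ^ 2 * y / (1 + g * y) + h

theorem quadratic_formula_roots_vieta {K : Type*} [Field K] [NeZero (2 : K)] {g b c s : K}
    (hg : g ≠ 0) (hs : discrim g b c = s * s) :
    g * ((-b + s) / (2 * g) + (-b - s) / (2 * g)) = -b ∧
      g * ((-b + s) / (2 * g) * ((-b - s) / (2 * g))) = c := by
  have h2 : (2 : K) ≠ 0 := two_ne_zero
  rw [discrim] at hs
  constructor
  · field_simp
    ring
  · field_simp
    linear_combination hs

section Vieta

variable {K : Type*} [Field K] {a g h r q : K}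
  (hsum : g * (r + q) = -(1 - a ^ 2 - g * h)) (hprod : g * (r * q) = -h)
include hsum hprod

theorem one_add_mul_root_mul_one_add_mul_root : (1 + g * r) * (1 + g * q) = a ^ 2 := by
  linear_combination hsum + g * hprod

theorem sq_div_sq_one_add_mul_root (hr : 1 + g * r ≠ 0) :
    a ^ 2 / (1 + g * r) ^ 2 = (1 + g * q) / (1 + g * r) := by
  rw [← one_add_mul_root_mul_one_add_mul_root hsum hprod, sq, mul_div_mul_left _ _ hr]

theorem cdareMap_sub_root {y : K} (hy : 1 + g * y ≠ 0) :
    cdareMap a g h y - r = (1 + g * q) * (y - r) / (1 + g * y) := by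
  rw [cdareMap, eq_div_iff hy, sub_mul, add_mul, div_mul_cancel₀ _ hy]
  linear_combination (-y) * hsum + hprod

theorem cdareMap_root_ratio {y : K} (hy : 1 + g * y ≠ 0) :
    (cdareMap a g h y - q) / (cdareMap a g h y - r) =
      (1 + g * r) / (1 + g * q) * ((y - q) / (y - r)) := by
  have hsum' : g * (q + r) = -(1 - a ^ 2 - g * h) := by rw [add_comm]; exact hsum
  have hprod' : g * (q * r) = -h := by rw [mul_comm q]; exact hprod
  rw [cdareMap_sub_root hsum hprod hy, cdareMap_sub_root hsum' hprod' hy,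
    div_div_div_cancel_right₀ hy, mul_div_mul_comm]

theorem iterate_root_ratio {x : ℕ → K} (hrec : ∀ k, x (k + 1) = cdareMap a g h (x k))
    (hx : ∀ k, 1 + g * x k ≠ 0) (k : ℕ) :
    (x k - q) / (x k - r) = ((1 + g * r) / (1 + g * q)) ^ k * ((x 0 - q) / (x 0 - r)) := by
  induction k with
  | zero => simp
  | succ k ih => rw [hrec, cdareMap_root_ratio hsum hprod (hx k), ih, pow_succ, mul_assoc,
      mul_left_comm]

end Vieta

theorem eq_add_div_root_ratio_sub_one {K : Type*} [Field K] {r q y : K} (hy : y ≠ r)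
    (hqr : q ≠ r) : y = r + (r - q) / ((y - q) / (y - r) - 1) := by
  have hy' : y - r ≠ 0 := sub_ne_zero.mpr hy
  have hratio : (y - q) / (y - r) - 1 = (r - q) / (y - r) := by
    rw [div_sub_one hy']
    ring
  rw [hratio, div_div_cancel₀ (sub_ne_zero.mpr hqr.symm)]
  ring

section Order

variable {K : Type*} [Field K] [LinearOrder K] [IsStrictOrderedRing K] {a g h r q : K}
  (hsum : g * (r + q) = -(1 - a ^ 2 - g * h)) (hprod : g * (r * q) = -h)
  (hg : 0 ≤ g) (hr : 0 < 1 + g * r) (hq : 0 < 1 + g * q)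
include hsum hprod hg hr hq

theorem root_lt_cdareMap {y : K} (hy : r < y) : r < cdareMap a g h y := by
  have hgy : 0 < 1 + g * y := by nlinarith
  rw [← sub_pos, cdareMap_sub_root hsum hprod hgy.ne']
  exact div_pos (mul_pos hq (sub_pos.mpr hy)) hgy

theorem root_lt_iterate {x : ℕ → K} (hrec : ∀ k, x (k + 1) = cdareMap a g h (x k))
    (hx0 : r < x 0) (k : ℕ) : r < x k := by
  induction k with
  | zero => exact hx0
  | succ k ih => rw [hrec]; exact root_lt_cdareMap hsum hprod hg hr hq ih

end Order

theorem one_add_mul_roots_pos {K : Type*} [Field K] [LinearOrder K] [IsStrictOrderedRing K]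
    {a g h r q : K} (hsum : g * (r + q) = -(1 - a ^ 2 - g * h)) (hprod : g * (r * q) = -h)
    (ha : 0 < a) (hh : -(1 - a) ^ 2 < g * h) : 0 < 1 + g * r ∧ 0 < 1 + g * q := by
  have hmul : 0 < (1 + g * r) * (1 + g * q) := by
    rw [one_add_mul_root_mul_one_add_mul_root hsum hprod]
    positivity
  have hadd : 0 < (1 + g * r) + (1 + g * q) := by nlinarith
  rcases pos_and_pos_or_neg_and_neg_of_mul_pos hmul with hpos | ⟨hr, hq⟩
  · exact hpos
  · linarith

theorem cdare_discriminant_pos {a g h : ℝ} (ha : 0 < a) (hh : -(1 - a) ^ 2 < g * h) :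
    0 < (1 - a ^ 2 - g * h) ^ 2 + 4 * g * h := by
  have hfactor : (1 - a ^ 2 - g * h) ^ 2 + 4 * g * h =
      (g * h + (1 - a) ^ 2) * (g * h + (1 + a) ^ 2) := by ring
  rw [hfactor]
  apply mul_pos <;> nlinarith

/-- Scalar fixed-point iteration, closed form in the case of two distinct roots
(`h > h_M`, starting point `x₀ > x_M`):
`x_k = x_M + (x_M - x_m) / (s t̂^{-k} - 1)` with `s = (x₀ - x_m)/(x₀ - x_M)`,
and `0 < t̂ < 1`. -/
theorem scalar_fpi_closed_form_distinct_roots (a g h : ℝ) (ha : 0 < a) (hg : 0 < g)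
    (hh : h > -(1 - a) ^ 2 / g)
    (x : ℕ → ℝ) (hrec : ∀ k : ℕ, x (k + 1) = a ^ 2 * x k / (1 + g * x k) + h) :
    let D : ℝ := (1 - a ^ 2 - g * h) ^ 2 + 4 * g * h
    let xM : ℝ := (-(1 - a ^ 2 - g * h) + Real.sqrt D) / (2 * g)
    let xm : ℝ := (-(1 - a ^ 2 - g * h) - Real.sqrt D) / (2 * g)
    let t : ℝ := a ^ 2 / (1 + g * xM) ^ 2
    let s : ℝ := (x 0 - xm) / (x 0 - xM)
    x 0 > xM →
      0 < t ∧ t < 1 ∧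
      ∀ k : ℕ, 0 < 1 + g * x k ∧
        x k = xM + (xM - xm) / (s * t ^ (-(k : ℤ)) - 1) := by
  intro D xM xm t s hx0
  have hgh : -(1 - a) ^ 2 < g * h := by
    rw [gt_iff_lt, div_lt_iff₀ hg] at hh
    linarith
  have hD : 0 < D := cdare_discriminant_pos ha hgh
  obtain ⟨hsum, hprod⟩ : g * (xM + xm) = -(1 - a ^ 2 - g * h) ∧ g * (xM * xm) = -h :=
    quadratic_formula_roots_vieta hg.ne' (by rw [discrim, Real.mul_self_sqrt hD.le]; ring)
  have hlt : xm < xM :=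
    div_lt_div_of_pos_right (by linarith [Real.sqrt_pos.mpr hD]) (by positivity)
  obtain ⟨hM, hm⟩ := one_add_mul_roots_pos hsum hprod ha hgh
  have ht : t = (1 + g * xm) / (1 + g * xM) := sq_div_sq_one_add_mul_root hsum hprod hM.ne'
  have hx : ∀ k, xM < x k := root_lt_iterate hsum hprod hg.le hM hm hrec hx0
  have hx_pos : ∀ k, 0 < 1 + g * x k := fun k => by nlinarith [hx k]
  refine ⟨by rw [ht]; positivity, by rw [ht, div_lt_one hM]; nlinarith, fun k => ⟨hx_pos k, ?_⟩⟩
  have hratio : s * t ^ (-(k : ℤ)) = (x k - xm) / (x k - xM) := by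
    rw [iterate_root_ratio hsum hprod hrec (fun j => (hx_pos j).ne') k, zpow_neg, zpow_natCast,
      ← inv_pow, ht, inv_div, mul_comm]
  rw [hratio]
  exact eq_add_div_root_ratio_sub_one (hx k).ne' hlt.ne
end

section
/- (Scalar FPI, closed form for the double root) Let a > 0, g > 0, h = h_M := −(1−a)²/g, so that the quadratic g·x² + (1 − a² − g·h)·x − h = 0 has the double root x_M = x_m with multiplier t̂_{x_M} = 1. Let x_0 > x_M and define x_{k+1} := a²·x_k/(1 + g·x_k) + h. Then each x_k is well-defined and for all k ≥ 0, x_k = x_M + a·(x_0 − x_M)/(g·(x_0 − x_M)·k + a); consequently (x_k) decreases to x_M and lim_{k→∞} |x_{k+1} − x_M|/|x_k − x_M| = 1 (sublinear convergence). -/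
open Filter Topology

/-!
At `h = h_M` the double root is `x_M = (a - 1)/g`, and `1 + g x_M = a`. Writing `e = x - x_M`,
the iteration becomes the Möbius map `e ↦ a e/(a + g e)`, whose only fixed point is `0`; in the
reciprocal variable it is the translation `1/e ↦ 1/e + g/a`. Hence `1/e_k = 1/e_0 + g k/a`, which
is the closed form, and the error ratio `e_{k+1}/e_k = (g e_0 k + a)/(g e_0 (k + 1) + a)` tends
to `1`.
-/

section DoubleRoot

variable {a g h : ℝ}

theorem discriminant_eq_zero_of_eq_hM (hg : g ≠ 0) (hh : h = -(1 - a) ^ 2 / g) :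
    (1 - a ^ 2 - g * h) ^ 2 + 4 * g * h = 0 := by
  subst hh; field_simp; ring

theorem doubleRoot_eq_of_eq_hM (hg : g ≠ 0) (hh : h = -(1 - a) ^ 2 / g) :
    -(1 - a ^ 2 - g * h) / (2 * g) = (a - 1) / g := by
  subst hh; field_simp; ring

theorem one_add_mul_doubleRoot (hg : g ≠ 0) : 1 + g * ((a - 1) / g) = a := by
  field_simp; ring

theorem fpi_step_sub_doubleRoot (hg : g ≠ 0) (hh : h = -(1 - a) ^ 2 / g) {x : ℝ}
    (hx : 1 + g * x ≠ 0) :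
    a ^ 2 * x / (1 + g * x) + h - (a - 1) / g =
      a * (x - (a - 1) / g) / (a + g * (x - (a - 1) / g)) := by
  have hden : a + g * (x - (a - 1) / g) = 1 + g * x := by field_simp; ring
  rw [hden, eq_div_iff hx, sub_mul, add_mul, div_mul_cancel₀ _ hx, hh]
  field_simp
  ring

end DoubleRoot

-- The step is assumed only at positive points: the iteration map of the theorem is undefined
-- where `1 + g x = 0`, and the orbit never leaves `e > 0`.
theorem mobius_orbit_eq {a g : ℝ} (ha : 0 < a) (hg : 0 ≤ g) {e : ℕ → ℝ} (he₀ : 0 < e 0)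
    (hstep : ∀ k, 0 < e k → e (k + 1) = a * e k / (a + g * e k)) (k : ℕ) :
    e k = a * e 0 / (g * e 0 * k + a) := by
  induction k with
  | zero => field_simp; simp
  | succ k ih =>
    have hden : 0 < g * e 0 * k + a := by positivity
    have hpos : 0 < e k := by rw [ih]; positivity
    rw [hstep k hpos, ih]
    field_simp
    push_cast
    ring

section InverseAffine

variable {c p q : ℝ}

theorem strictAnti_div_mul_natCast_add (hc : 0 < c) (hp : 0 < p) (hq : 0 < q) :
    StrictAnti fun k : ℕ => c / (p * k + q) := by
  refine strictAnti_nat_of_succ_lt fun k => div_lt_div_of_pos_left hc (by positivity) ?_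
  push_cast
  linarith

theorem tendsto_div_mul_natCast_add_zero (hp : 0 < p) :
    Tendsto (fun k : ℕ => c / (p * k + q)) atTop (𝓝 0) :=
  tendsto_const_nhds.div_atTop <|
    tendsto_atTop_add_const_right _ _ (tendsto_natCast_atTop_atTop.const_mul_atTop hp)

theorem tendsto_div_mul_natCast_add_ratio (hc : c ≠ 0) (hp : 0 < p) (hq : 0 < q) :
    Tendsto (fun k : ℕ => c / (p * (k + 1 : ℕ) + q) / (c / (p * k + q))) atTop (𝓝 1) := by
  have hlim := tendsto_add_mul_div_add_mul_atTop_nhds q (p + q) p hp.ne'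
  rw [div_self hp.ne'] at hlim
  refine hlim.congr fun k => ?_
  have : 0 < p * k + q := by positivity
  field_simp
  push_cast
  ring

end InverseAffine

/-- Scalar fixed-point iteration, closed form in the double-root case `h = h_M`:
`x_k = x_M + a (x₀ - x_M)/(g (x₀ - x_M) k + a)`; the iterates decrease to `x_M` and the
convergence is sublinear. -/
theorem scalar_fpi_closed_form_double_root (a g h : ℝ) (ha : 0 < a) (hg : 0 < g)
    (hh : h = -(1 - a) ^ 2 / g)
    (x : ℕ → ℝ) (hrec : ∀ k : ℕ, x (k + 1) = a ^ 2 * x k / (1 + g * x k) + h) :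
    let xM : ℝ := -(1 - a ^ 2 - g * h) / (2 * g)
    x 0 > xM →
      (1 - a ^ 2 - g * h) ^ 2 + 4 * g * h = 0 ∧
      a ^ 2 / (1 + g * xM) ^ 2 = 1 ∧
      (∀ k : ℕ, 0 < 1 + g * x k ∧
        x k = xM + a * (x 0 - xM) / (g * (x 0 - xM) * (k : ℝ) + a)) ∧
      StrictAnti x ∧
      Filter.Tendsto x Filter.atTop (nhds xM) ∧
      Filter.Tendsto (fun k : ℕ => |x (k + 1) - xM| / |x k - xM|) Filter.atTop (nhds 1) := by
  intro xM hx₀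
  have hxM : xM = (a - 1) / g := doubleRoot_eq_of_eq_hM hg.ne' hh
  have hd : 0 < x 0 - xM := sub_pos.2 hx₀
  have hden : ∀ k, 1 + g * x k = a + g * (x k - xM) := fun k => by
    rw [hxM]; field_simp; ring
  have herr : ∀ k, x k - xM = a * (x 0 - xM) / (g * (x 0 - xM) * k + a) :=
    mobius_orbit_eq (e := fun k => x k - xM) ha hg.le hd fun k hk => by
      have hx : 1 + g * x k ≠ 0 := by rw [hden]; positivity
      simp only [hrec k, hxM] at hk ⊢
      exact fpi_step_sub_doubleRoot hg.ne' hh hx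
  have herr_pos : ∀ k, 0 < x k - xM := fun k => by rw [herr]; positivity
  have hx_eq : x = fun k : ℕ => xM + a * (x 0 - xM) / (g * (x 0 - xM) * k + a) :=
    funext fun k => by rw [← herr]; ring
  have hc : 0 < a * (x 0 - xM) := by positivity
  have hp : 0 < g * (x 0 - xM) := by positivity
  refine ⟨discriminant_eq_zero_of_eq_hM hg.ne' hh, ?_, fun k => ⟨?_, by rw [← herr]; ring⟩,
    ?_, ?_, ?_⟩
  · rw [hxM, one_add_mul_doubleRoot hg.ne', div_self (by positivity)]
  · rw [hden]; have := herr_pos k; positivity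
  · rw [hx_eq]; exact (strictAnti_div_mul_natCast_add hc hp ha).const_add xM
  · rw [hx_eq]; simpa using (tendsto_div_mul_natCast_add_zero hp).const_add xM
  · refine (tendsto_div_mul_natCast_add_ratio hc.ne' hp ha).congr fun k => ?_
    rw [abs_of_pos (herr_pos _), abs_of_pos (herr_pos _), herr (k + 1), herr k]
end

section
/- (Scalar FPI, convergence to the maximal/minimal solution) Let a > 0, g > 0, and let x_m ≤ x_M be the roots of g·x² + (1 − a² − g·h)·x − h = 0 when D := (1 − a² − g·h)² + 4·g·h ≥ 0. Define x_{k+1} := a²·x_k/(1 + g·x_k) + h. (i) If h > h_M := −(1−a)²/g and x_0 > x_M, then (x_k) is nonincreasing, converges to x_M, and lim_{k→∞} |x_k − x_M|^{1/k} = a²/(1+g·x_M)² < 1; if instead x_m < x_0 < x_M, then (x_k) is nondecreasing and converges to x_M with the same root-rate. (ii) If h < h_m := −(1+a)²/g and x_0 > x_M, then (x_k) converges to the minimal solution x_m. -/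
/-!
In the variable `u = 1 + g x` the iteration is the Möbius map `u ↦ s - a² / u`,
`s = 1 + a² + g h`, whose fixed points `p = 1 + g x_M` and `q = 1 + g x_m` satisfy `p q = a²`
and `p + q = s`. Hence
`(x_{k+1} - x_M) / (x_{k+1} - x_m) = (q / p) (x_k - x_M) / (x_k - x_m)`, and along an orbit
avoiding the pole `x = -1/g` this gives `x_k - x_M = c (q/p)^k (x_k - x_m)` with
`c = (x_0 - x_M) / (x_0 - x_m)`.

For `h > h_M` we have `0 < q < p`, the orbit stays above `x_m`, and the closed form yields
monotonicity, convergence to `x_M` and the root rate `q / p = a² / p²`. For `h < h_m` we have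
`q < p < 0`: an orbit started above `x_M` must reach `1 + g x ≥ 0` (otherwise `c (q/p)^k` would
stay below `1`), the next iterate lies below `x_m`, and from there the closed form with the roles
of the roots exchanged, now with ratio `p / q < 1`, gives convergence to `x_m`.
-/

open Filter Topology

theorem tendsto_of_sub_eq_mul_sub {x s : ℕ → ℝ} {y z : ℝ} (hs : Tendsto s atTop (𝓝 0))
    (hx : ∀ k, x k - z = s k * (x k - y)) : Tendsto x atTop (𝓝 z) := by
  have hlim : Tendsto (fun k => z + s k * (z - y) / (1 - s k)) atTop (𝓝 z) := by
    simpa using ((hs.mul_const (z - y)).div (tendsto_const_nhds.sub hs) (by norm_num)).const_add z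
  refine hlim.congr' ?_
  filter_upwards [hs.eventually_ne zero_ne_one] with k hk
  field_simp [sub_ne_zero.2 hk.symm]
  linear_combination -(hx k)

/-- `x - y = (z - y) / (1 - r)` is increasing in `r < 1`. -/
theorem le_of_sub_eq_mul_sub {x x' r r' y z : ℝ} (hyz : y < z) (hx : y < x) (hx' : y < x')
    (he : x - z = r * (x - y)) (he' : x' - z = r' * (x' - y)) (hr : r ≤ r') : x ≤ x' := by
  have hr' : 0 < 1 - r' := by nlinarith
  nlinarith [mul_nonneg (sub_nonneg.2 hr) (sub_pos.2 hx).le]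

theorem tendsto_abs_rpow_one_div_of_eq_pow_mul {e b : ℕ → ℝ} {t B : ℝ} (ht : 0 ≤ t)
    (hb : Tendsto b atTop (𝓝 B)) (hB : B ≠ 0) (he : ∀ k, e k = t ^ k * b k) :
    Tendsto (fun k : ℕ => |e k| ^ ((1 : ℝ) / k)) atTop (𝓝 t) := by
  have hroot : Tendsto (fun k : ℕ => |b k| ^ ((1 : ℝ) / k)) atTop (𝓝 1) := by
    simpa using hb.abs.rpow tendsto_one_div_atTop_nhds_zero_nat (Or.inl (abs_ne_zero.2 hB))
  refine (mul_one t ▸ hroot.const_mul t).congr' ?_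
  filter_upwards [eventually_ne_atTop 0] with k hk
  rw [he, abs_mul, abs_pow, abs_of_nonneg ht, Real.mul_rpow (by positivity) (abs_nonneg _),
    one_div, Real.pow_rpow_inv_natCast ht hk]

theorem lt_of_one_add_mul_lt_one_add_mul {g u v : ℝ} (hg : 0 < g)
    (huv : 1 + g * u < 1 + g * v) : u < v :=
  lt_of_mul_lt_mul_left (by linarith) hg.le

noncomputable section

namespace ScalarCDARE

def map (a g h x : ℝ) : ℝ := a ^ 2 * x / (1 + g * x) + h

def discr (a g h : ℝ) : ℝ := (1 - a ^ 2 - g * h) ^ 2 + 4 * g * h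

def rootMax (a g h : ℝ) : ℝ := (-(1 - a ^ 2 - g * h) + Real.sqrt (discr a g h)) / (2 * g)

def rootMin (a g h : ℝ) : ℝ := (-(1 - a ^ 2 - g * h) - Real.sqrt (discr a g h)) / (2 * g)

/-- Vieta's formulas for the CDARE in the variable `u = 1 + g x`, in which the map becomes
`u ↦ (1 + a² + g h) - a² / u`. -/
def IsRootPair (a g h xM xm : ℝ) : Prop :=
  (1 + g * xM) * (1 + g * xm) = a ^ 2 ∧ (1 + g * xM) + (1 + g * xm) = 1 + a ^ 2 + g * h

variable {a g h xM xm : ℝ}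

namespace IsRootPair

theorem symm (hr : IsRootPair a g h xM xm) : IsRootPair a g h xm xM :=
  ⟨(mul_comm _ _).trans hr.1, (add_comm _ _).trans hr.2⟩

theorem map_sub (hr : IsRootPair a g h xM xm) (hg : g ≠ 0) {x : ℝ} (hx : 1 + g * x ≠ 0) :
    map a g h x - xM = (1 + g * xm) / (1 + g * x) * (x - xM) := by
  unfold map
  rw [div_mul_eq_mul_div, eq_div_iff hx, sub_mul, add_mul, div_mul_cancel₀ _ hx]
  refine mul_left_cancel₀ hg ?_
  linear_combination hr.1 - (1 + g * x) * hr.2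

theorem map_sub_eq_mul (hr : IsRootPair a g h xM xm) (hg : g ≠ 0) {x r : ℝ}
    (hx : 1 + g * x ≠ 0) (hM : 1 + g * xM ≠ 0) (hxr : x - xM = r * (x - xm)) :
    map a g h x - xM = (1 + g * xm) / (1 + g * xM) * r * (map a g h x - xm) := by
  rw [hr.map_sub hg hx, hr.symm.map_sub hg hx, hxr]
  field_simp

theorem sq_div_sq (hr : IsRootPair a g h xM xm) (hM : 1 + g * xM ≠ 0) :
    a ^ 2 / (1 + g * xM) ^ 2 = (1 + g * xm) / (1 + g * xM) := by
  rw [← hr.1]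
  field_simp

theorem lt_map (hr : IsRootPair a g h xM xm) (hg : g ≠ 0) {x : ℝ} (hx : xM < x)
    (hpos : 0 < (1 + g * xm) / (1 + g * x)) : xM < map a g h x := by
  have hx0 : 1 + g * x ≠ 0 := fun h0 => by simp [h0] at hpos
  have := hr.map_sub hg hx0
  nlinarith [mul_pos hpos (sub_pos.2 hx)]

theorem map_lt (hr : IsRootPair a g h xM xm) (hg : g ≠ 0) {x : ℝ} (hx : x < xM)
    (hpos : 0 < (1 + g * xm) / (1 + g * x)) : map a g h x < xM := by
  have hx0 : 1 + g * x ≠ 0 := fun h0 => by simp [h0] at hpos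
  have := hr.map_sub hg hx0
  nlinarith [mul_pos hpos (sub_pos.2 hx)]

/-- Also true at `1 + g x = 0`, where division by zero makes `map a g h x = h`. -/
theorem map_lt_of_nonneg (hr : IsRootPair a g h xM xm) (hg : 0 < g) (hM : 1 + g * xM < 0)
    {x : ℝ} (hx : 0 ≤ 1 + g * x) : map a g h x < xm := by
  have hfrac : a ^ 2 * x / (1 + g * x) ≤ a ^ 2 / g := by
    rcases hx.eq_or_lt with hx0 | hx0
    · rw [← hx0, div_zero]
      positivity
    · rw [div_le_div_iff₀ hx0 hg]
      nlinarith [sq_nonneg a]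
  have hbound : a ^ 2 / g < xm - h := by
    rw [div_lt_iff₀ hg]
    linarith [hr.2]
  unfold map
  linarith

end IsRootPair

theorem discr_eq : discr a g h = (1 + a ^ 2 + g * h) ^ 2 - (2 * a) ^ 2 := by
  unfold discr
  ring

theorem one_add_mul_rootMax (hg : g ≠ 0) :
    1 + g * rootMax a g h = (1 + a ^ 2 + g * h + Real.sqrt (discr a g h)) / 2 := by
  unfold rootMax
  field_simp
  ring

theorem one_add_mul_rootMin (hg : g ≠ 0) :
    1 + g * rootMin a g h = (1 + a ^ 2 + g * h - Real.sqrt (discr a g h)) / 2 := by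
  unfold rootMin
  field_simp
  ring

theorem isRootPair_rootMax_rootMin (hg : g ≠ 0) (hD : 0 ≤ discr a g h) :
    IsRootPair a g h (rootMax a g h) (rootMin a g h) := by
  rw [IsRootPair, one_add_mul_rootMax hg, one_add_mul_rootMin hg]
  constructor
  · linear_combination (-1 / 4 : ℝ) * Real.sq_sqrt hD - discr_eq / 4
  · ring

theorem sqrt_discr_pos_lt (ha : 0 < a) (hs : 2 * a < |1 + a ^ 2 + g * h|) :
    0 < Real.sqrt (discr a g h) ∧ Real.sqrt (discr a g h) < |1 + a ^ 2 + g * h| := by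
  have hD : 0 < discr a g h := by
    rw [discr_eq, ← sq_abs (1 + a ^ 2 + g * h), sub_pos]
    exact sq_lt_sq' (by linarith) hs
  refine ⟨Real.sqrt_pos.2 hD, (Real.sqrt_lt' (by linarith)).2 ?_⟩
  rw [sq_abs, discr_eq]
  nlinarith

theorem isRootPair_pos_of_lt (ha : 0 < a) (hg : 0 < g) (hh : -(1 - a) ^ 2 / g < h) :
    IsRootPair a g h (rootMax a g h) (rootMin a g h) ∧
      0 < 1 + g * rootMin a g h ∧ 1 + g * rootMin a g h < 1 + g * rootMax a g h := by
  have hs : 2 * a < 1 + a ^ 2 + g * h := by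
    rw [div_lt_iff₀ hg] at hh
    nlinarith
  obtain ⟨hpos, hlt⟩ := sqrt_discr_pos_lt ha (hs.trans_le (le_abs_self _))
  rw [abs_of_pos (by linarith)] at hlt
  rw [one_add_mul_rootMin hg.ne', one_add_mul_rootMax hg.ne']
  exact ⟨isRootPair_rootMax_rootMin hg.ne' (Real.sqrt_pos.1 hpos).le, by linarith, by linarith⟩

theorem isRootPair_neg_of_lt (ha : 0 < a) (hg : 0 < g) (hh : h < -(1 + a) ^ 2 / g) :
    IsRootPair a g h (rootMax a g h) (rootMin a g h) ∧
      1 + g * rootMin a g h < 1 + g * rootMax a g h ∧ 1 + g * rootMax a g h < 0 := by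
  have hs : 2 * a < -(1 + a ^ 2 + g * h) := by
    rw [lt_div_iff₀ hg] at hh
    nlinarith
  obtain ⟨hpos, hlt⟩ := sqrt_discr_pos_lt ha (hs.trans_le (neg_le_abs _))
  rw [abs_of_neg (by linarith)] at hlt
  rw [one_add_mul_rootMin hg.ne', one_add_mul_rootMax hg.ne']
  exact ⟨isRootPair_rootMax_rootMin hg.ne' (Real.sqrt_pos.1 hpos).le, by linarith, by linarith⟩

namespace IsRootPair

variable {x : ℕ → ℝ}

theorem orbit_sub_eq (hr : IsRootPair a g h xM xm) (hg : g ≠ 0)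
    (hrec : ∀ k, x (k + 1) = map a g h (x k)) (hx : ∀ k, 1 + g * x k ≠ 0)
    (hM : 1 + g * xM ≠ 0) (h0 : x 0 ≠ xm) (k : ℕ) :
    x k - xM = (x 0 - xM) / (x 0 - xm) * ((1 + g * xm) / (1 + g * xM)) ^ k * (x k - xm) := by
  induction k with
  | zero => field_simp [sub_ne_zero.2 h0]
  | succ k ih =>
    rw [hrec, hr.map_sub_eq_mul hg (hx k) hM ih]
    ring

theorem orbit_of_rootMin_lt (hr : IsRootPair a g h xM xm) (hg : 0 < g)
    (hrec : ∀ k, x (k + 1) = map a g h (x k)) (hm : 0 < 1 + g * xm)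
    (hmM : 1 + g * xm < 1 + g * xM) (h0 : xm < x 0) :
    (∀ k, xm < x k) ∧ ∀ k, x k - xM =
      (x 0 - xM) / (x 0 - xm) * ((1 + g * xm) / (1 + g * xM)) ^ k * (x k - xm) := by
  have hpos : ∀ y, xm < y → 0 < 1 + g * y := fun y hy => by nlinarith
  have hinv : ∀ k, xm < x k := by
    intro k
    induction k with
    | zero => exact h0
    | succ k ih => rw [hrec]; exact hr.symm.lt_map hg.ne' ih (div_pos (by linarith) (hpos _ ih))
  exact ⟨hinv, hr.orbit_sub_eq hg.ne' hrec (fun k => (hpos _ (hinv k)).ne') (by linarith)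
    h0.ne'⟩

theorem tendsto_rootMax (hr : IsRootPair a g h xM xm) (hg : 0 < g)
    (hrec : ∀ k, x (k + 1) = map a g h (x k)) (hm : 0 < 1 + g * xm)
    (hmM : 1 + g * xm < 1 + g * xM) (h0 : xm < x 0) (h0M : x 0 ≠ xM) :
    Tendsto x atTop (𝓝 xM) ∧
      Tendsto (fun k : ℕ => |x k - xM| ^ ((1 : ℝ) / k)) atTop
        (𝓝 ((1 + g * xm) / (1 + g * xM))) := by
  obtain ⟨-, horbit⟩ := hr.orbit_of_rootMin_lt hg hrec hm hmM h0
  set c := (x 0 - xM) / (x 0 - xm)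
  set t := (1 + g * xm) / (1 + g * xM)
  have ht0 : 0 ≤ t := (div_pos hm (hm.trans hmM)).le
  have ht1 : t < 1 := (div_lt_one (hm.trans hmM)).2 hmM
  have hlim : Tendsto x atTop (𝓝 xM) := tendsto_of_sub_eq_mul_sub
    (by simpa using (tendsto_pow_atTop_nhds_zero_of_lt_one ht0 ht1).const_mul c) horbit
  have hc : c * (xM - xm) ≠ 0 := mul_ne_zero (div_ne_zero (sub_ne_zero.2 h0M)
    (sub_ne_zero.2 h0.ne')) (sub_ne_zero.2 (lt_of_one_add_mul_lt_one_add_mul hg hmM).ne')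
  refine ⟨hlim, tendsto_abs_rpow_one_div_of_eq_pow_mul ht0 ((hlim.sub_const xm).const_mul c) hc
    fun k => ?_⟩
  rw [horbit]
  ring

theorem antitone_of_rootMax_lt (hr : IsRootPair a g h xM xm) (hg : 0 < g)
    (hrec : ∀ k, x (k + 1) = map a g h (x k)) (hm : 0 < 1 + g * xm)
    (hmM : 1 + g * xm < 1 + g * xM) (h0 : xM < x 0) : Antitone x := by
  have hlt := lt_of_one_add_mul_lt_one_add_mul hg hmM
  obtain ⟨hinv, horbit⟩ := hr.orbit_of_rootMin_lt hg hrec hm hmM (hlt.trans h0)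
  have ht : Antitone fun k => ((1 + g * xm) / (1 + g * xM)) ^ k :=
    pow_right_anti₀ (div_pos hm (hm.trans hmM)).le ((div_le_one (hm.trans hmM)).2 hmM.le)
  have hs := ht.const_mul (div_pos (sub_pos.2 h0) (sub_pos.2 (hlt.trans h0))).le
  exact fun i j hij => le_of_sub_eq_mul_sub hlt (hinv j) (hinv i) (horbit j) (horbit i) (hs hij)

theorem monotone_of_lt_rootMax (hr : IsRootPair a g h xM xm) (hg : 0 < g)
    (hrec : ∀ k, x (k + 1) = map a g h (x k)) (hm : 0 < 1 + g * xm)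
    (hmM : 1 + g * xm < 1 + g * xM) (h0 : xm < x 0) (h0M : x 0 < xM) : Monotone x := by
  have hlt := lt_of_one_add_mul_lt_one_add_mul hg hmM
  obtain ⟨hinv, horbit⟩ := hr.orbit_of_rootMin_lt hg hrec hm hmM h0
  have ht : Antitone fun k => ((1 + g * xm) / (1 + g * xM)) ^ k :=
    pow_right_anti₀ (div_pos hm (hm.trans hmM)).le ((div_le_one (hm.trans hmM)).2 hmM.le)
  have hs := ht.const_mul_of_nonpos (div_neg_of_neg_of_pos (sub_neg.2 h0M) (sub_pos.2 h0)).le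
  exact fun i j hij => le_of_sub_eq_mul_sub hlt (hinv i) (hinv j) (horbit i) (horbit j) (hs hij)

theorem exists_nonneg_one_add_mul (hr : IsRootPair a g h xM xm) (hg : 0 < g)
    (hrec : ∀ k, x (k + 1) = map a g h (x k)) (hmM : 1 + g * xm < 1 + g * xM)
    (hM : 1 + g * xM < 0) (h0 : xM < x 0) : ∃ N, 0 ≤ 1 + g * x N := by
  by_contra! hneg
  have hlt := lt_of_one_add_mul_lt_one_add_mul hg hmM
  have hinv : ∀ k, xM < x k := by
    intro k
    induction k with
    | zero => exact h0
    | succ k ih =>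
      rw [hrec]; exact hr.lt_map hg.ne' ih (div_pos_of_neg_of_neg (by linarith) (hneg k))
  have horbit := hr.orbit_sub_eq hg.ne' hrec (fun k => (hneg k).ne) hM.ne (by linarith)
  have hc : 0 < (x 0 - xM) / (x 0 - xm) := div_pos (by linarith) (by linarith)
  obtain ⟨k, hk⟩ := pow_unbounded_of_one_lt ((x 0 - xM) / (x 0 - xm))⁻¹
    ((one_lt_div_of_neg hM).2 hmM)
  rw [inv_lt_iff_one_lt_mul₀ hc] at hk
  nlinarith [horbit k, hinv k]

theorem tendsto_rootMin_of_lt (hr : IsRootPair a g h xM xm) (hg : 0 < g)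
    (hrec : ∀ k, x (k + 1) = map a g h (x k)) (hmM : 1 + g * xm < 1 + g * xM)
    (hM : 1 + g * xM < 0) (h0 : x 0 < xm) : Tendsto x atTop (𝓝 xm) := by
  have hneg : ∀ y, y < xm → 1 + g * y < 0 := fun y hy => by nlinarith
  have hinv : ∀ k, x k < xm := by
    intro k
    induction k with
    | zero => exact h0
    | succ k ih =>
      rw [hrec]; exact hr.symm.map_lt hg.ne' ih (div_pos_of_neg_of_neg hM (hneg _ ih))
  have horbit := hr.symm.orbit_sub_eq hg.ne' hrec (fun k => (hneg _ (hinv k)).ne)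
    (by linarith) (h0.trans (lt_of_one_add_mul_lt_one_add_mul hg hmM)).ne
  have ht0 : 0 ≤ (1 + g * xM) / (1 + g * xm) := (div_pos_of_neg_of_neg hM (by linarith)).le
  have ht1 : (1 + g * xM) / (1 + g * xm) < 1 := (div_lt_one_of_neg (by linarith)).2 hmM
  exact tendsto_of_sub_eq_mul_sub
    (by simpa using (tendsto_pow_atTop_nhds_zero_of_lt_one ht0 ht1).const_mul _) horbit

theorem tendsto_rootMin_of_rootMax_lt (hr : IsRootPair a g h xM xm) (hg : 0 < g)
    (hrec : ∀ k, x (k + 1) = map a g h (x k)) (hmM : 1 + g * xm < 1 + g * xM)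
    (hM : 1 + g * xM < 0) (h0 : xM < x 0) : Tendsto x atTop (𝓝 xm) := by
  obtain ⟨N, hN⟩ := hr.exists_nonneg_one_add_mul hg hrec hmM hM h0
  have hshift : ∀ k, x (k + 1 + (N + 1)) = map a g h (x (k + (N + 1))) := fun k => by
    rw [add_right_comm]; exact hrec _
  refine (tendsto_add_atTop_iff_nat (N + 1)).1 (hr.tendsto_rootMin_of_lt hg hshift hmM hM ?_)
  rw [zero_add, hrec]
  exact hr.map_lt_of_nonneg hg hM hN

end IsRootPair

end ScalarCDARE

end

open ScalarCDARE in
/-- Scalar fixed-point iteration, convergence to the maximal/minimal solution.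
(i) For `h > h_M`: starting above `x_M` the iterates decrease to `x_M`; starting in
`(x_m, x_M)` they increase to `x_M`; in both cases the root-rate is
`a²/(1 + g x_M)² < 1`.  (ii) For `h < h_m` and `x₀ > x_M`, the iterates converge to the
minimal solution `x_m`. -/
theorem scalar_fpi_convergence (a g h : ℝ) (ha : 0 < a) (hg : 0 < g)
    (x : ℕ → ℝ) (hrec : ∀ k : ℕ, x (k + 1) = a ^ 2 * x k / (1 + g * x k) + h) :
    let D : ℝ := (1 - a ^ 2 - g * h) ^ 2 + 4 * g * h
    let hM : ℝ := -(1 - a) ^ 2 / g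
    let hm : ℝ := -(1 + a) ^ 2 / g
    let xM : ℝ := (-(1 - a ^ 2 - g * h) + Real.sqrt D) / (2 * g)
    let xm : ℝ := (-(1 - a ^ 2 - g * h) - Real.sqrt D) / (2 * g)
    let t : ℝ := a ^ 2 / (1 + g * xM) ^ 2
    (h > hM →
      (x 0 > xM →
        Antitone x ∧ Filter.Tendsto x Filter.atTop (nhds xM) ∧ t < 1 ∧
        Filter.Tendsto (fun k : ℕ => |x k - xM| ^ ((1 : ℝ) / (k : ℝ)))
          Filter.atTop (nhds t)) ∧
      (xm < x 0 ∧ x 0 < xM →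
        Monotone x ∧ Filter.Tendsto x Filter.atTop (nhds xM) ∧ t < 1 ∧
        Filter.Tendsto (fun k : ℕ => |x k - xM| ^ ((1 : ℝ) / (k : ℝ)))
          Filter.atTop (nhds t))) ∧
    (h < hm → x 0 > xM → Filter.Tendsto x Filter.atTop (nhds xm)) := by
  intro D hM hm xM xm t
  refine ⟨fun hh => ?_, fun hh hx0 => ?_⟩
  · obtain ⟨hr, hm0, hmM⟩ := isRootPair_pos_of_lt ha hg hh
    have ht : t = (1 + g * xm) / (1 + g * xM) := hr.sq_div_sq (hm0.trans hmM).ne'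
    have ht1 : t < 1 := ht ▸ (div_lt_one (hm0.trans hmM)).2 hmM
    have hlt : xm < xM := lt_of_one_add_mul_lt_one_add_mul hg hmM
    refine ⟨fun hx0 => ?_, fun ⟨hx0m, hx0M⟩ => ?_⟩
    · obtain ⟨hlim, hrate⟩ := hr.tendsto_rootMax hg hrec hm0 hmM (hlt.trans hx0) hx0.ne'
      exact ⟨hr.antitone_of_rootMax_lt hg hrec hm0 hmM hx0, hlim, ht1, ht ▸ hrate⟩
    · obtain ⟨hlim, hrate⟩ := hr.tendsto_rootMax hg hrec hm0 hmM hx0m hx0M.ne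
      exact ⟨hr.monotone_of_lt_rootMax hg hrec hm0 hmM hx0m hx0M, hlim, ht1, ht ▸ hrate⟩
  · obtain ⟨hr, hmM, hM0⟩ := isRootPair_neg_of_lt ha hg hh
    exact hr.tendsto_rootMin_of_rootMax_lt hg hrec hmM hM0 hx0
end
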